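/- arXiv:hep-th/9412031 — 2 statements merged into one kernel-verified Lean document; each statement's English description precedes it below -/
import Mathlib

section
/- Let 𝔤 be a Lie algebra acting on a manifold M by a Lie algebra morphism ρ: 𝔤 → Vect(M), and let r = Σᵢ aᵢ ∧ bᵢ ∈ Λ²𝔤. Define the bracket {f,g} = Σᵢ (ρ(aᵢ)f · ρ(bᵢ)g − ρ(bᵢ)f · ρ(aᵢ)g) on C^∞(M). If the image under ρ of the Schouten bracket [r,r] = [r¹²,r¹³] + [r¹²,r²³] + [r¹³,r²³] ∈ Λ³𝔤 vanishes as a 3-vector field on M, then {·,·} satisfies the Jacobi identity, and hence is a Poisson bracket on M. -/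
/-!
By the Leibniz rule, the Jacobiator of `{·,·} = Σᵢ {·,·}_{aᵢ ∧ bᵢ}` is the double sum over `(i, j)`
of the mixed Jacobiators of the elementary brackets of `aᵢ ∧ bᵢ` and `aⱼ ∧ bⱼ`. After
symmetrizing in `(i, j)`, the second derivatives pair up into commutators
`ρ x ρ y - ρ y ρ x = ρ ⁅x, y⁆`, and what remains is the `(i, j)` block of `ρ([r,r])` applied to
`df₁ ⊗ df₂ ⊗ df₃`, symmetrized as well. Halving (no `2`-torsion) identifies the Jacobiator with
`ρ([r,r])(df₁, df₂, df₃) = 0`.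
-/

open Finset

theorem Finset.sum_sum_eq_of_add_swap_eq {ι M : Type*} [AddCommMonoid M] [IsAddTorsionFree M]
    {s : Finset ι} {F G : ι → ι → M} (h : ∀ i ∈ s, ∀ j ∈ s, F i j + F j i = G i j + G j i) :
    ∑ i ∈ s, ∑ j ∈ s, F i j = ∑ i ∈ s, ∑ j ∈ s, G i j := by
  have two_nsmul_sum (H : ι → ι → M) :
      2 • ∑ i ∈ s, ∑ j ∈ s, H i j = ∑ i ∈ s, ∑ j ∈ s, (H i j + H j i) := by
    rw [two_nsmul]
    nth_rewrite 2 [sum_comm]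
    simp only [sum_add_distrib]
  apply nsmul_right_injective two_ne_zero
  simp only [two_nsmul_sum]
  exact sum_congr rfl fun i hi => sum_congr rfl fun j hj => h i hi j hj

section BivectorBracket

variable {R g A : Type*} [CommRing R] [LieRing g] [Module R g] [CommRing A] [Algebra R A]
  (ρ : g →ₗ[R] Module.End R A)

def bivectorBracket (x y : g) (f₁ f₂ : A) : A :=
  ρ x f₁ * ρ y f₂ - ρ y f₁ * ρ x f₂

def jacobiator (B C : A → A → A) (f₁ f₂ f₃ : A) : A :=
  B f₁ (C f₂ f₃) + B f₂ (C f₃ f₁) + B f₃ (C f₁ f₂)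

/-- `ρ([u¹², v¹³] + [u¹², v²³] + [u¹³, v²³])` for `u = u₁ ⊗ u₂`, `v = v₁ ⊗ v₂`, evaluated on
`df₁ ⊗ df₂ ⊗ df₃`. -/
def schoutenPairing (u₁ u₂ v₁ v₂ : g) (f₁ f₂ f₃ : A) : A :=
  ρ ⁅u₁, v₁⁆ f₁ * (ρ u₂ f₂ * ρ v₂ f₃) + ρ u₁ f₁ * (ρ ⁅u₂, v₁⁆ f₂ * ρ v₂ f₃)
    + ρ u₁ f₁ * (ρ v₁ f₂ * ρ ⁅u₂, v₂⁆ f₃)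

/-- `schoutenPairing` summed over the components of `x ∧ y = x ⊗ y + y ⊗ (-x)` and
`z ∧ w = z ⊗ w + w ⊗ (-z)`. -/
def schoutenWedge (x y z w : g) (f₁ f₂ f₃ : A) : A :=
  schoutenPairing ρ x y z w f₁ f₂ f₃ + schoutenPairing ρ x y w (-z) f₁ f₂ f₃
    + schoutenPairing ρ y (-x) z w f₁ f₂ f₃ + schoutenPairing ρ y (-x) w (-z) f₁ f₂ f₃

theorem bivectorBracket_sum_right {ι : Type*} (s : Finset ι) (x y : g) (f : A) (h : ι → A) :
    bivectorBracket ρ x y f (∑ j ∈ s, h j) = ∑ j ∈ s, bivectorBracket ρ x y f (h j) := by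
  simp only [bivectorBracket, map_sum, mul_sum, ← sum_sub_distrib]

theorem jacobiator_sum_bivectorBracket {ι : Type*} (s : Finset ι) (a b : ι → g) (f₁ f₂ f₃ : A) :
    jacobiator (fun f f' => ∑ i ∈ s, bivectorBracket ρ (a i) (b i) f f')
        (fun f f' => ∑ i ∈ s, bivectorBracket ρ (a i) (b i) f f') f₁ f₂ f₃ =
      ∑ i ∈ s, ∑ j ∈ s, jacobiator (bivectorBracket ρ (a i) (b i))
        (bivectorBracket ρ (a j) (b j)) f₁ f₂ f₃ := by
  simp only [jacobiator, bivectorBracket_sum_right, sum_add_distrib]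

theorem sum_schoutenPairing_sumElim {ι : Type*} [Fintype ι] (a b : ι → g) (f₁ f₂ f₃ : A) :
    ∑ k : ι ⊕ ι, ∑ l : ι ⊕ ι, schoutenPairing ρ (Sum.elim a b k) (Sum.elim b (-a) k)
        (Sum.elim a b l) (Sum.elim b (-a) l) f₁ f₂ f₃ =
      ∑ i, ∑ j, schoutenWedge ρ (a i) (b i) (a j) (b j) f₁ f₂ f₃ := by
  simp only [schoutenWedge, Fintype.sum_sum_type, Sum.elim_inl, Sum.elim_inr, Pi.neg_apply,
    sum_add_distrib]
  abel

variable {ρ}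

theorem jacobiator_bivectorBracket_add_swap
    (hder : ∀ (x : g) (f₁ f₂ : A), ρ x (f₁ * f₂) = f₁ * ρ x f₂ + ρ x f₁ * f₂)
    (hlie : ∀ x y : g, ρ ⁅x, y⁆ = ρ x * ρ y - ρ y * ρ x) (x y z w : g) (f₁ f₂ f₃ : A) :
    jacobiator (bivectorBracket ρ x y) (bivectorBracket ρ z w) f₁ f₂ f₃
        + jacobiator (bivectorBracket ρ z w) (bivectorBracket ρ x y) f₁ f₂ f₃ =
      schoutenWedge ρ x y z w f₁ f₂ f₃ + schoutenWedge ρ z w x y f₁ f₂ f₃ := by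
  simp only [jacobiator, bivectorBracket, schoutenWedge, schoutenPairing, map_sub, hder, hlie,
    LinearMap.sub_apply, Module.End.mul_apply, map_neg, LinearMap.neg_apply, lie_neg, neg_lie]
  ring

end BivectorBracket

/-- if a Lie algebra `𝔤` acts on (the function algebra of) a manifold by
derivations via `ρ`, `r = Σᵢ aᵢ ∧ bᵢ ∈ Λ²𝔤`, and the image under `ρ` of the Schouten
bracket `[r,r] = [r¹²,r¹³]+[r¹²,r²³]+[r¹³,r²³]` vanishes as a 3-vector field, then the
bracket `{f,g} = Σᵢ (ρ(aᵢ)f·ρ(bᵢ)g − ρ(bᵢ)f·ρ(aᵢ)g)` satisfies the Jacobi identity,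
hence is a Poisson bracket. -/
theorem stmt_5 {g A : Type*} [LieRing g] [LieAlgebra ℝ g]
    [CommRing A] [Algebra ℝ A]
    (ρ : g →ₗ[ℝ] Module.End ℝ A)
    (hder : ∀ (x : g) (f₁ f₂ : A), ρ x (f₁ * f₂) = f₁ * ρ x f₂ + ρ x f₁ * f₂)
    (hlie : ∀ x y : g, ρ ⁅x, y⁆ = ρ x * ρ y - ρ y * ρ x)
    {n : ℕ} (a b : Fin n → g) :
    -- the full (antisymmetrized) tensor of r: r = Σ_k r1 k ⊗ r2 k
    let r1 : Fin n ⊕ Fin n → g := Sum.elim a b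
    let r2 : Fin n ⊕ Fin n → g := Sum.elim b (fun i => -a i)
    -- the R-matrix bracket
    let br : A → A → A := fun f₁ f₂ =>
      ∑ i : Fin n, (ρ (a i) f₁ * ρ (b i) f₂ - ρ (b i) f₁ * ρ (a i) f₂)
    -- hypothesis: ρ([r,r]) = 0 as a 3-vector field
    (∀ f₁ f₂ f₃ : A,
      ∑ k : Fin n ⊕ Fin n, ∑ l : Fin n ⊕ Fin n,
        (ρ ⁅r1 k, r1 l⁆ f₁ * (ρ (r2 k) f₂ * ρ (r2 l) f₃)
          + ρ (r1 k) f₁ * (ρ ⁅r2 k, r1 l⁆ f₂ * ρ (r2 l) f₃)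
          + ρ (r1 k) f₁ * (ρ (r1 l) f₂ * ρ ⁅r2 k, r2 l⁆ f₃)) = 0) →
    -- conclusion: Jacobi identity
    ∀ f₁ f₂ f₃ : A,
      br f₁ (br f₂ f₃) + br f₂ (br f₃ f₁) + br f₃ (br f₁ f₂) = 0 := by
  intro r1 r2 br hschouten f₁ f₂ f₃
  have : IsAddTorsionFree A := .of_isTorsionFree ℝ A
  calc jacobiator br br f₁ f₂ f₃
      = ∑ i, ∑ j, jacobiator (bivectorBracket ρ (a i) (b i))
          (bivectorBracket ρ (a j) (b j)) f₁ f₂ f₃ :=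
        jacobiator_sum_bivectorBracket ρ univ a b f₁ f₂ f₃
    _ = ∑ i, ∑ j, schoutenWedge ρ (a i) (b i) (a j) (b j) f₁ f₂ f₃ :=
        sum_sum_eq_of_add_swap_eq fun i _ j _ =>
          jacobiator_bivectorBracket_add_swap hder hlie (a i) (b i) (a j) (b j) f₁ f₂ f₃
    _ = 0 := by
        rw [← sum_schoutenPairing_sumElim]
        exact hschouten f₁ f₂ f₃
end

section
/- Let a Lie group G act on a manifold M, let {·,·}_inv be a G-invariant Poisson bracket on C^∞(M), and let {·,·} be the bracket induced by a bivector ρ(r) coming from an element r ∈ Λ²𝔤 via the infinitesimal action ρ: 𝔤 → Vect(M), and assume {·,·} is itself a Poisson bracket. Then the two brackets are compatible: for all scalars a, b, the bracket a{·,·} + b{·,·}_inv satisfies the Jacobi identity, i.e., is a Poisson bracket. -/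
/-!
Expanding the Jacobiator of `s • B + t • P` gives `s² J(B) + t² J(P) + s t [B, P]`, where `[B, P] = J(B, P) + J(P, B)`
is the mixed Jacobiator (the Schouten bracket of the two bivectors). The first two terms vanish
because both brackets are Poisson. The mixed term is additive in `B`, and for a single wedge
`X ∧ Y` of derivations preserving `P` it vanishes by the Leibniz rule and skew-symmetry of `P`.
-/

section Jacobiator

variable {R A : Type*} [CommRing R] [AddCommGroup A] [Module R A]

def mixedJacobiator (B C : A →ₗ[R] A →ₗ[R] A) (f₁ f₂ f₃ : A) : A :=
  B f₁ (C f₂ f₃) + B f₂ (C f₃ f₁) + B f₃ (C f₁ f₂)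

theorem mixedJacobiator_smul_add_smul (B C : A →ₗ[R] A →ₗ[R] A) (s t : R) (f₁ f₂ f₃ : A) :
    mixedJacobiator (s • B + t • C) (s • B + t • C) f₁ f₂ f₃ =
      (s * s) • mixedJacobiator B B f₁ f₂ f₃ + (t * t) • mixedJacobiator C C f₁ f₂ f₃ +
        (s * t) • (mixedJacobiator B C f₁ f₂ f₃ + mixedJacobiator C B f₁ f₂ f₃) := by
  simp only [mixedJacobiator, LinearMap.add_apply, LinearMap.smul_apply, map_add, map_smul]
  module

theorem mixedJacobiator_sum_left {ι : Type*} (s : Finset ι) (B : ι → A →ₗ[R] A →ₗ[R] A)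
    (C : A →ₗ[R] A →ₗ[R] A) (f₁ f₂ f₃ : A) :
    mixedJacobiator (∑ i ∈ s, B i) C f₁ f₂ f₃ = ∑ i ∈ s, mixedJacobiator (B i) C f₁ f₂ f₃ := by
  simp only [mixedJacobiator, LinearMap.sum_apply, Finset.sum_add_distrib]

theorem mixedJacobiator_sum_right {ι : Type*} (s : Finset ι) (B : A →ₗ[R] A →ₗ[R] A)
    (C : ι → A →ₗ[R] A →ₗ[R] A) (f₁ f₂ f₃ : A) :
    mixedJacobiator B (∑ i ∈ s, C i) f₁ f₂ f₃ = ∑ i ∈ s, mixedJacobiator B (C i) f₁ f₂ f₃ := by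
  simp only [mixedJacobiator, LinearMap.sum_apply, map_sum,
    Finset.sum_add_distrib]

end Jacobiator

section Wedge

variable {R A : Type*} [CommRing R] [CommRing A] [Algebra R A]

/-- The bracket of the bivector `X ∧ Y`. -/
def wedgeBracket (X Y : Module.End R A) : A →ₗ[R] A →ₗ[R] A :=
  (LinearMap.mul R A).compl₁₂ X Y - (LinearMap.mul R A).compl₁₂ Y X

@[simp]
theorem wedgeBracket_apply (X Y : Module.End R A) (f g : A) :
    wedgeBracket X Y f g = X f * Y g - Y f * X g :=
  rfl

theorem mixedJacobiator_wedgeBracket_add {X Y : Module.End R A} {P : A →ₗ[R] A →ₗ[R] A}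
    (hPskew : ∀ f g : A, P f g = -P g f)
    (hPder : ∀ f₁ f₂ f₃ : A, P f₁ (f₂ * f₃) = P f₁ f₂ * f₃ + f₂ * P f₁ f₃)
    (hX : ∀ f g : A, X (P f g) = P (X f) g + P f (X g))
    (hY : ∀ f g : A, Y (P f g) = P (Y f) g + P f (Y g)) (f₁ f₂ f₃ : A) :
    mixedJacobiator (wedgeBracket X Y) P f₁ f₂ f₃ +
      mixedJacobiator P (wedgeBracket X Y) f₁ f₂ f₃ = 0 := by
  simp only [mixedJacobiator, wedgeBracket_apply, map_sub, hPder, hX, hY]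
  rw [hPskew (X f₂) f₃, hPskew (Y f₂) f₃, hPskew (X f₃) f₁, hPskew (Y f₃) f₁,
    hPskew (X f₁) f₂, hPskew (Y f₁) f₂]
  ring

end Wedge

theorem stmt_6_general {g A : Type*} [LieRing g] [LieAlgebra ℝ g]
    [CommRing A] [Algebra ℝ A]
    (ρ : g →ₗ[ℝ] Module.End ℝ A)
    {n : ℕ} (a b : Fin n → g)
    (P : A →ₗ[ℝ] A →ₗ[ℝ] A)
    (hPskew : ∀ f₁ f₂ : A, P f₁ f₂ = -P f₂ f₁)
    (hPder : ∀ f₁ f₂ f₃ : A, P f₁ (f₂ * f₃) = P f₁ f₂ * f₃ + f₂ * P f₁ f₃)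
    (hPjac : ∀ f₁ f₂ f₃ : A, P f₁ (P f₂ f₃) + P f₂ (P f₃ f₁) + P f₃ (P f₁ f₂) = 0)
    -- 𝔤-invariance (infinitesimal G-invariance) of P
    (hPinv : ∀ (x : g) (f₁ f₂ : A), ρ x (P f₁ f₂) = P (ρ x f₁) f₂ + P f₁ (ρ x f₂)) :
    let br : A → A → A := fun f₁ f₂ =>
      ∑ i : Fin n, (ρ (a i) f₁ * ρ (b i) f₂ - ρ (b i) f₁ * ρ (a i) f₂)
    -- hypothesis: the R-matrix bracket is itself Poisson
    (∀ f₁ f₂ f₃ : A, br f₁ (br f₂ f₃) + br f₂ (br f₃ f₁) + br f₃ (br f₁ f₂) = 0) →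
    -- conclusion: all linear combinations satisfy Jacobi
    ∀ s t : ℝ, ∀ f₁ f₂ f₃ : A,
      (let C : A → A → A := fun f₁ f₂ => s • br f₁ f₂ + t • P f₁ f₂
       C f₁ (C f₂ f₃) + C f₂ (C f₃ f₁) + C f₃ (C f₁ f₂) = 0) := by
  intro br hbrJac s t f₁ f₂ f₃ C
  set B : A →ₗ[ℝ] A →ₗ[ℝ] A := ∑ i, wedgeBracket (ρ (a i)) (ρ (b i))
  have hB : ∀ f g, br f g = B f g := by
    intro f g
    simp [br, B, LinearMap.sum_apply]
  have hBjac : mixedJacobiator B B f₁ f₂ f₃ = 0 := by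
    simpa only [mixedJacobiator, hB] using hbrJac f₁ f₂ f₃
  have hmix : mixedJacobiator B P f₁ f₂ f₃ + mixedJacobiator P B f₁ f₂ f₃ = 0 := by
    rw [mixedJacobiator_sum_left, mixedJacobiator_sum_right, ← Finset.sum_add_distrib]
    exact Finset.sum_eq_zero fun i _ =>
      mixedJacobiator_wedgeBracket_add hPskew hPder (hPinv (a i)) (hPinv (b i)) f₁ f₂ f₃
  have hjac : mixedJacobiator (s • B + t • P) (s • B + t • P) f₁ f₂ f₃ = 0 := by
    rw [mixedJacobiator_smul_add_smul, hBjac, hmix, mixedJacobiator, hPjac]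
    simp
  simpa [C, mixedJacobiator, hB] using hjac

/-- an `R`-matrix bracket `{·,·}` (assumed Poisson) coming from `r ∈ Λ²𝔤` via an
infinitesimal action `ρ` by derivations, and a `𝔤`-invariant Poisson bracket `{·,·}_inv = P`,
are compatible: every linear combination `a{·,·} + bP` satisfies the Jacobi identity. -/
theorem stmt_6 {g A : Type*} [LieRing g] [LieAlgebra ℝ g]
    [CommRing A] [Algebra ℝ A]
    (ρ : g →ₗ[ℝ] Module.End ℝ A)
    (hder : ∀ (x : g) (f₁ f₂ : A), ρ x (f₁ * f₂) = f₁ * ρ x f₂ + ρ x f₁ * f₂)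
    (hlie : ∀ x y : g, ρ ⁅x, y⁆ = ρ x * ρ y - ρ y * ρ x)
    {n : ℕ} (a b : Fin n → g)
    (P : A →ₗ[ℝ] A →ₗ[ℝ] A)
    (hPskew : ∀ f₁ f₂ : A, P f₁ f₂ = -P f₂ f₁)
    (hPder : ∀ f₁ f₂ f₃ : A, P f₁ (f₂ * f₃) = P f₁ f₂ * f₃ + f₂ * P f₁ f₃)
    (hPjac : ∀ f₁ f₂ f₃ : A, P f₁ (P f₂ f₃) + P f₂ (P f₃ f₁) + P f₃ (P f₁ f₂) = 0)
    -- 𝔤-invariance (infinitesimal G-invariance) of P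
    (hPinv : ∀ (x : g) (f₁ f₂ : A), ρ x (P f₁ f₂) = P (ρ x f₁) f₂ + P f₁ (ρ x f₂)) :
    let br : A → A → A := fun f₁ f₂ =>
      ∑ i : Fin n, (ρ (a i) f₁ * ρ (b i) f₂ - ρ (b i) f₁ * ρ (a i) f₂)
    -- hypothesis: the R-matrix bracket is itself Poisson
    (∀ f₁ f₂ f₃ : A, br f₁ (br f₂ f₃) + br f₂ (br f₃ f₁) + br f₃ (br f₁ f₂) = 0) →
    -- conclusion: all linear combinations satisfy Jacobi
    ∀ s t : ℝ, ∀ f₁ f₂ f₃ : A,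
      (let C : A → A → A := fun f₁ f₂ => s • br f₁ f₂ + t • P f₁ f₂
       C f₁ (C f₂ f₃) + C f₂ (C f₃ f₁) + C f₃ (C f₁ f₂) = 0) :=
  stmt_6_general ρ a b P hPskew hPder hPjac hPinv
end
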